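/- The greatest clearing wealth map x ↦ V(x) is a Borel measurable function from ℝⁿ₊ to ℝⁿ. Consequently, for any random endowment vector X : Ω → ℝⁿ₊ (measurable on a probability space (Ω, 𝓕, ℙ)), the random vectors V(X), p(X) = p̄ − V(X)⁻ and E(X) = V(X)⁺ are measurable. -/

import Mathlib

/-!
Ψ_x is monotone and bounded above by Ψ_x(0), so its iterates started at Ψ_x(0) decrease and stay
above every fixed point. Ψ_x is continuous from above (a coordinate that is `≥ 0` stays `≥ 0`
along a decreasing approach), hence the limit of the iterates is a fixed point, and therefore the
greatest one. Each iterate is a Borel function of `x`, so `V` is a pointwise limit of measurable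
maps.
-/

open Matrix BigOperators MeasureTheory

noncomputable section

/-- Total liabilities `p̄_i = Σ_{j=1}^{n+1} L_{ij}`. -/
def pbar {n : ℕ} (L : Matrix (Fin n) (Fin (n + 1)) ℝ) (i : Fin n) : ℝ :=
  ∑ j, L i j

/-- Relative liabilities `π_{ij} = L_{ij} / p̄_i` if `p̄_i > 0`, else `0`. -/
def relLiab {n : ℕ} (L : Matrix (Fin n) (Fin (n + 1)) ℝ) (i j : Fin n) : ℝ :=
  if 0 < pbar L i then L i j.castSucc / pbar L i else 0

/-- The clearing map in wealths `Ψ_x`. -/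
def Psi {n : ℕ} (L : Matrix (Fin n) (Fin (n + 1)) ℝ) (αx αL : ℝ)
    (x V : Fin n → ℝ) (i : Fin n) : ℝ :=
  if 0 ≤ V i then
    x i + ∑ j, relLiab L j i * max (pbar L j - max (-(V j)) 0) 0 - pbar L i
  else
    αx * x i + αL * ∑ j, relLiab L j i * max (pbar L j - max (-(V j)) 0) 0 - pbar L i

open Filter Topology

theorem Monotone.tendsto_iterate_of_isGreatest_fixedPoints {α : Type*}
    [ConditionallyCompleteLattice α] [TopologicalSpace α] [InfConvergenceClass α] [T2Space α]
    {F : α → α} (hF : Monotone F) (hcont : ∀ W, ContinuousWithinAt F (Set.Ici W) W)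
    {b V : α} (hb : ∀ y, F y ≤ b) (hV : IsGreatest (Function.fixedPoints F) V) :
    Tendsto (fun k => F^[k] b) atTop (𝓝 V) := by
  have hanti : Antitone fun k => F^[k] b := hF.antitone_iterate_of_map_le (hb b)
  have hV_le : ∀ k, V ≤ F^[k] b := fun k => by
    calc V = F^[k] V := (Function.IsFixedPt.iterate hV.1 k).symm
      _ ≤ F^[k] b := hF.iterate k (hV.1 ▸ hb V)
  have hbdd : BddBelow (Set.range fun k => F^[k] b) := ⟨V, Set.forall_mem_range.2 hV_le⟩
  set W := ⨅ k, F^[k] b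
  have hW : Tendsto (fun k => F^[k] b) atTop (𝓝 W) := tendsto_atTop_ciInf hanti hbdd
  have hW_fixed : F W = W := by
    have hWithin : Tendsto (fun k => F^[k] b) atTop (𝓝[Set.Ici W] W) :=
      tendsto_nhdsWithin_iff.2 ⟨hW, Eventually.of_forall fun k => ciInf_le hbdd k⟩
    refine tendsto_nhds_unique ((hcont W).tendsto.comp hWithin) ?_
    simpa only [Function.comp_def, ← Function.iterate_succ_apply'] using
      hW.comp (tendsto_add_atTop_nat 1)
  have hWV : W = V := le_antisymm (hV.2 hW_fixed) (le_ciInf hV_le)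
  exact hWV ▸ hW

section Clearing

variable {n : ℕ} {L : Matrix (Fin n) (Fin (n + 1)) ℝ} {αx αL : ℝ}

/-- `Σ_j π_{ji} p_j(V)` with the payments `p_j(V) = (p̄_j − V_j⁻)⁺`. -/
def inflow (L : Matrix (Fin n) (Fin (n + 1)) ℝ) (V : Fin n → ℝ) (i : Fin n) : ℝ :=
  ∑ j, relLiab L j i * max (pbar L j - max (-(V j)) 0) 0

theorem Psi_apply (x V : Fin n → ℝ) (i : Fin n) :
    Psi L αx αL x V i =
      if 0 ≤ V i then x i + inflow L V i - pbar L i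
      else αx * x i + αL * inflow L V i - pbar L i :=
  rfl

theorem relLiab_nonneg (hL : ∀ i j, 0 ≤ L i j) (i j : Fin n) : 0 ≤ relLiab L i j := by
  unfold relLiab
  split_ifs with h
  · exact div_nonneg (hL i _) h.le
  · exact le_rfl

theorem inflow_nonneg (hL : ∀ i j, 0 ≤ L i j) (V : Fin n → ℝ) (i : Fin n) :
    0 ≤ inflow L V i :=
  Finset.sum_nonneg fun j _ => mul_nonneg (relLiab_nonneg hL j i) (le_max_right _ _)

theorem inflow_mono (hL : ∀ i j, 0 ≤ L i j) {V V' : Fin n → ℝ} (h : V ≤ V') (i : Fin n) :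
    inflow L V i ≤ inflow L V' i := by
  refine Finset.sum_le_sum fun j _ => mul_le_mul_of_nonneg_left ?_ (relLiab_nonneg hL j i)
  exact max_le_max_right _ (sub_le_sub_left (max_le_max_right _ (neg_le_neg (h j))) _)

theorem inflow_le_inflow_zero (hL : ∀ i j, 0 ≤ L i j) (V : Fin n → ℝ) (i : Fin n) :
    inflow L V i ≤ inflow L 0 i := by
  refine Finset.sum_le_sum fun j _ => mul_le_mul_of_nonneg_left ?_ (relLiab_nonneg hL j i)
  simp only [Pi.zero_apply, neg_zero, max_self, sub_zero]
  exact max_le_max_right _ (sub_le_self _ (le_max_right _ _))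

theorem default_le_solvent (hαx : αx ≤ 1) (hαL : αL ≤ 1) {x s s' : ℝ}
    (hx : 0 ≤ x) (hs : 0 ≤ s) (hss' : s ≤ s') :
    αx * x + αL * s ≤ x + s' := by
  nlinarith [mul_nonneg (sub_nonneg.2 hαx) hx, mul_nonneg (sub_nonneg.2 hαL) hs]

theorem Psi_le_Psi_zero (hL : ∀ i j, 0 ≤ L i j) (hαx : αx ≤ 1) (hαL : αL ≤ 1)
    {x : Fin n → ℝ} (hx : ∀ i, 0 ≤ x i) (V : Fin n → ℝ) :
    Psi L αx αL x V ≤ Psi L αx αL x 0 := by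
  intro i
  have hS := inflow_le_inflow_zero hL V i
  rw [Psi_apply, Psi_apply, Pi.zero_apply, if_pos le_rfl]
  split_ifs
  · linarith
  · linarith [default_le_solvent hαx hαL (hx i) (inflow_nonneg hL V i) hS]

theorem Psi_mono (hL : ∀ i j, 0 ≤ L i j) (hαx : αx ≤ 1) (hαL : αL ∈ Set.Icc (0 : ℝ) 1)
    {x : Fin n → ℝ} (hx : ∀ i, 0 ≤ x i) :
    Monotone (Psi L αx αL x) := by
  intro V V' h i
  have hS := inflow_mono hL h i
  rw [Psi_apply, Psi_apply]
  split_ifs with hV hV'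
  · linarith
  · exact absurd (hV.trans (h i)) hV'
  · linarith [default_le_solvent hαx hαL.2 (hx i) (inflow_nonneg hL V i) hS]
  · linarith [mul_le_mul_of_nonneg_left hS hαL.1]

theorem continuous_inflow (i : Fin n) : Continuous fun V : Fin n → ℝ => inflow L V i := by
  unfold inflow
  fun_prop

theorem continuousWithinAt_Psi_Ici (x W : Fin n → ℝ) :
    ContinuousWithinAt (Psi L αx αL x) (Set.Ici W) W := by
  refine continuousWithinAt_pi.2 fun i => ?_
  by_cases hW : 0 ≤ W i
  · have hsolvent : Set.EqOn (fun V => Psi L αx αL x V i)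
        (fun V => x i + inflow L V i - pbar L i) (Set.Ici W) :=
      fun V hV => if_pos (hW.trans (hV i))
    exact ((continuous_const.add (continuous_inflow i)).sub continuous_const).continuousWithinAt
      |>.congr hsolvent (hsolvent Set.self_mem_Ici)
  · have hdefault : (fun V => Psi L αx αL x V i) =ᶠ[𝓝 W]
        fun V => αx * x i + αL * inflow L V i - pbar L i := by
      filter_upwards [(continuous_apply i).continuousAt.eventually_lt continuousAt_const
        (not_le.1 hW)] with V hV
      exact if_neg (not_le.2 hV)
    refine (ContinuousAt.congr ?_ hdefault.symm).continuousWithinAt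
    exact ((continuous_const.add (continuous_const.mul (continuous_inflow i))).sub
      continuous_const).continuousAt

theorem measurable_Psi :
    Measurable fun p : (Fin n → ℝ) × (Fin n → ℝ) => Psi L αx αL p.1 p.2 := by
  refine measurable_pi_lambda _ fun i => ?_
  have hS : Measurable fun p : (Fin n → ℝ) × (Fin n → ℝ) => inflow L p.2 i :=
    (continuous_inflow i).measurable.comp measurable_snd
  have hx : Measurable fun p : (Fin n → ℝ) × (Fin n → ℝ) => p.1 i :=
    (measurable_pi_apply i).comp measurable_fst
  have hsolvent : MeasurableSet {p : (Fin n → ℝ) × (Fin n → ℝ) | 0 ≤ p.2 i} :=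
    measurableSet_le measurable_const ((measurable_pi_apply i).comp measurable_snd)
  exact Measurable.ite hsolvent ((hx.add hS).sub_const _)
    (((hx.const_mul αx).add (hS.const_mul αL)).sub_const _)

theorem measurable_iterate_Psi (k : ℕ) :
    Measurable fun x => (Psi L αx αL x)^[k] (Psi L αx αL x 0) := by
  induction k with
  | zero => exact measurable_Psi.comp (measurable_id.prodMk measurable_const)
  | succ k ih =>
    simp only [Function.iterate_succ_apply']
    exact measurable_Psi.comp (measurable_id.prodMk ih)

end Clearing

theorem clearing_wealth_measurable_general (n : ℕ)
    (L : Matrix (Fin n) (Fin (n + 1)) ℝ)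
    (hL : ∀ i j, 0 ≤ L i j)
    (αx αL : ℝ) (hαx : αx ∈ Set.Icc (0 : ℝ) 1) (hαL : αL ∈ Set.Icc (0 : ℝ) 1)
    (Vmap : (Fin n → ℝ) → (Fin n → ℝ))
    (hV : ∀ x : Fin n → ℝ, (∀ i, 0 ≤ x i) →
      IsGreatest {V | Psi L αx αL x V = V} (Vmap x)) :
    Measurable (fun x : {x : Fin n → ℝ // ∀ i, 0 ≤ x i} => Vmap x.val)
    ∧ (∀ (Ω : Type) (_ : MeasurableSpace Ω) (ℙ : Measure Ω),
        IsProbabilityMeasure ℙ →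
        ∀ X : Ω → Fin n → ℝ, Measurable X → (∀ ω i, 0 ≤ X ω i) →
          Measurable (fun ω => Vmap (X ω))
          ∧ Measurable (fun ω => fun i => pbar L i - max (-(Vmap (X ω) i)) 0)
          ∧ Measurable (fun ω => fun i => max (Vmap (X ω) i) 0)) := by
  have hmeas : Measurable fun x : {x : Fin n → ℝ // ∀ i, 0 ≤ x i} => Vmap x.val := by
    refine measurable_of_tendsto_metrizable
      (f := fun k x => (Psi L αx αL x.val)^[k] (Psi L αx αL x.val 0))
      (fun k => (measurable_iterate_Psi k).comp measurable_subtype_coe) (tendsto_pi_nhds.2 ?_)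
    intro x
    exact (Psi_mono hL hαx.2 hαL x.2).tendsto_iterate_of_isGreatest_fixedPoints
      (continuousWithinAt_Psi_Ici x.val) (Psi_le_Psi_zero hL hαx.2 hαL.2 x.2) (hV x.val x.2)
  refine ⟨hmeas, fun Ω _ ℙ _ X hX hX0 => ?_⟩
  have hVX : Measurable fun ω => Vmap (X ω) := hmeas.comp (hX.subtype_mk (h := hX0))
  refine ⟨hVX, measurable_pi_lambda _ fun i => ?_, measurable_pi_lambda _ fun i => ?_⟩
  · exact measurable_const.sub (((measurable_pi_apply i).comp hVX).neg.max measurable_const)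
  · exact ((measurable_pi_apply i).comp hVX).max measurable_const

/-- The greatest clearing wealth map `x ↦ V(x)` is Borel measurable from `ℝⁿ₊` to `ℝⁿ`.
Consequently, for any measurable random endowment vector `X : Ω → ℝⁿ₊`, the random vectors
`V(X)`, `p(X) = p̄ − V(X)⁻` and `E(X) = V(X)⁺` are measurable. -/
theorem clearing_wealth_measurable (n : ℕ) (hn : 1 ≤ n)
    (L : Matrix (Fin n) (Fin (n + 1)) ℝ)
    (hL : ∀ i j, 0 ≤ L i j) (hLdiag : ∀ i : Fin n, L i i.castSucc = 0)
    (αx αL : ℝ) (hαx : αx ∈ Set.Icc (0 : ℝ) 1) (hαL : αL ∈ Set.Icc (0 : ℝ) 1)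
    (Vmap : (Fin n → ℝ) → (Fin n → ℝ))
    (hV : ∀ x : Fin n → ℝ, (∀ i, 0 ≤ x i) →
      IsGreatest {V | Psi L αx αL x V = V} (Vmap x)) :
    Measurable (fun x : {x : Fin n → ℝ // ∀ i, 0 ≤ x i} => Vmap x.val)
    ∧ (∀ (Ω : Type) (_ : MeasurableSpace Ω) (ℙ : Measure Ω),
        IsProbabilityMeasure ℙ →
        ∀ X : Ω → Fin n → ℝ, Measurable X → (∀ ω i, 0 ≤ X ω i) →
          Measurable (fun ω => Vmap (X ω))
          ∧ Measurable (fun ω => fun i => pbar L i - max (-(Vmap (X ω) i)) 0)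
          ∧ Measurable (fun ω => fun i => max (Vmap (X ω) i) 0)) :=
  clearing_wealth_measurable_general n L hL αx αL hαx hαL Vmap hV
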